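/- Let b > 0 and let y = (y_1, y_2, y_3, y_4) ∈ ℕ⁴ with y_1 - y_3 = b, and set n = y_1 + y_2 + y_3 + y_4. With k(y) the number of lattice paths from the origin to y all of whose points except y satisfy x_1 - x_3 < b, and k_2*(y) the number of such paths starting from e_2 = (0,1,0,0), the identity (n-1) · k_2*(y) = y_2 · k(y) holds; equivalently, k_2*(y)/k(y) = y_2/(n-1). -/

import Mathlib

open scoped Classical

/-- Number of lattice paths from `a` to `x`, each step adding one standard
basis vector, all of whose points (including the endpoints) lie in `A`. -/
noncomputable def pathCount {k : ℕ} (A : Set (Fin k → ℕ)) (a : Fin k → ℕ)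
    (x : Fin k → ℕ) : ℕ :=
  if x = a then (if a ∈ A then 1 else 0)
  else if x ∈ A then
    ∑ i : Fin k, if h : 0 < x i then pathCount A a (Function.update x i (x i - 1)) else 0
  else 0
termination_by ∑ i, x i
decreasing_by
  have h1 := Finset.sum_update_of_mem (Finset.mem_univ i) x (x i - 1)
  have h2 := Finset.sum_eq_sum_sdiff_singleton_add (Finset.mem_univ i) x
  omega

/-- Number of lattice paths from `a` to `y` all of whose points except `y`
lie in `R`. -/
noncomputable def exitCount {k : ℕ} (R : Set (Fin k → ℕ)) (a y : Fin k → ℕ) : ℕ :=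
  pathCount (insert y R) a y

/-!
The last step of a path counted by `k(y)` or `k₂*(y)` comes from `y - e₁`, because the other
predecessors of `y` already lie outside `R`; so both count paths inside `R` to `w = y - e₁`, from
`0`, resp. `e₂`, and `|w| = n - 1`. Membership in `R` ignores the second coordinate, so paths
from `e₂` are the translates by `e₂` of paths from `0`, and the identity becomes
`w₂ · #(0 → w) = |w| · #(0 → w - e₂)`: among the paths to `w`, a proportion `w₂ / |w|` ends with
an `e₂`-step. This is proved by induction along the recursion defining the counts.
-/

section SingleStep

variable {ι : Type*} [DecidableEq ι] {x : ι → ℕ} {i j : ι}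

theorem Function.update_sub_one_eq_sub_single (x : ι → ℕ) (i : ι) :
    Function.update x i (x i - 1) = x - Pi.single i 1 := by
  ext l
  rcases eq_or_ne l i with rfl | hl <;> simp [*]

theorem sub_single_add_single (hx : 0 < x i) : x - Pi.single i 1 + Pi.single i 1 = x := by
  ext l
  rcases eq_or_ne l i with rfl | hl
  · simpa using Nat.sub_add_cancel hx
  · simp [hl]

theorem add_single_sub_single_of_ne (h : i ≠ j) :
    x + Pi.single j 1 - Pi.single i 1 = x - Pi.single i 1 + Pi.single j 1 := by
  ext l
  rcases eq_or_ne l i with rfl | hl <;> simp [*]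

theorem sub_single_lt (hx : 0 < x i) : x - Pi.single i 1 < x :=
  Pi.lt_def.2 ⟨tsub_le_self, i, by simpa using hx⟩

theorem sum_sub_single_add_one [Fintype ι] (hx : 0 < x i) :
    ∑ l, (x - Pi.single i 1 : ι → ℕ) l + 1 = ∑ l, x l := by
  conv_rhs => rw [← sub_single_add_single hx]
  simp [Finset.sum_add_distrib]

end SingleStep

section PathCount

variable {k : ℕ} {A B : Set (Fin k → ℕ)} {a x : Fin k → ℕ} {j : Fin k}

theorem pathCount_self : pathCount A a a = if a ∈ A then 1 else 0 := by
  rw [pathCount, if_pos rfl]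

theorem pathCount_of_notMem (hx : x ∉ A) : pathCount A a x = 0 := by
  rw [pathCount]
  split_ifs with hxa <;> simp_all

theorem pathCount_of_ne_of_mem (hxa : x ≠ a) (hx : x ∈ A) :
    pathCount A a x = ∑ i, if 0 < x i then pathCount A a (x - Pi.single i 1) else 0 := by
  rw [pathCount, if_neg hxa, if_pos hx]
  simp only [Function.update_sub_one_eq_sub_single, dite_eq_ite]

theorem pathCount_eq_zero_of_not_le (h : ¬ a ≤ x) : pathCount A a x = 0 := by
  induction x using WellFoundedLT.induction with
  | _ x ih =>
    by_cases hx : x ∈ A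
    · rw [pathCount_of_ne_of_mem (by rintro rfl; exact h le_rfl) hx]
      refine Finset.sum_eq_zero fun i _ => ?_
      split_ifs with hi
      · exact ih _ (sub_single_lt hi) fun hle => h (hle.trans tsub_le_self)
      · rfl
    · exact pathCount_of_notMem hx

theorem pathCount_congr (h : ∀ z ≤ x, z ∈ A ↔ z ∈ B) : pathCount A a x = pathCount B a x := by
  induction x using WellFoundedLT.induction with
  | _ x ih =>
    by_cases hxa : x = a
    · subst hxa
      simp only [pathCount_self, h x le_rfl]
    by_cases hx : x ∈ A
    · rw [pathCount_of_ne_of_mem hxa hx, pathCount_of_ne_of_mem hxa ((h x le_rfl).1 hx)]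
      refine Finset.sum_congr rfl fun i _ => ?_
      split_ifs with hi
      · exact ih _ (sub_single_lt hi) fun z hz => h z (hz.trans tsub_le_self)
      · rfl
    · rw [pathCount_of_notMem hx, pathCount_of_notMem (mt (h x le_rfl).2 hx)]

theorem pathCount_add_single_of_ne_of_mem (hxa : x + Pi.single j 1 ≠ a)
    (hx : x + Pi.single j 1 ∈ A) :
    pathCount A a (x + Pi.single j 1) = pathCount A a x + ∑ i ∈ Finset.univ.erase j,
      if 0 < x i then pathCount A a (x - Pi.single i 1 + Pi.single j 1) else 0 := by
  rw [pathCount_of_ne_of_mem hxa hx, ← Finset.add_sum_erase _ _ (Finset.mem_univ j)]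
  congr 1
  · simp
  · refine Finset.sum_congr rfl fun i hi => ?_
    have hij := Finset.ne_of_mem_erase hi
    simp [hij, add_single_sub_single_of_ne hij]

theorem pathCount_add_single_add_single (hA : ∀ x, x + Pi.single j 1 ∈ A ↔ x ∈ A) :
    pathCount A (a + Pi.single j 1) (x + Pi.single j 1) = pathCount A a x := by
  induction x using WellFoundedLT.induction with
  | _ x ih =>
    by_cases hxa : x = a
    · subst hxa
      simp only [pathCount_self, hA]
    by_cases hx : x ∈ A
    · rw [pathCount_add_single_of_ne_of_mem (by simpa using hxa) ((hA x).2 hx),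
        pathCount_of_ne_of_mem hxa hx, ← Finset.add_sum_erase _ _ (Finset.mem_univ j)]
      congr 1
      · split_ifs with hj
        · rw [← ih _ (sub_single_lt hj), sub_single_add_single hj]
        · exact pathCount_eq_zero_of_not_le fun h => hj (Nat.zero_lt_of_lt (by simpa using h j))
      · refine Finset.sum_congr rfl fun i _ => ?_
        split_ifs with hi
        · exact ih _ (sub_single_lt hi)
        · rfl
    · rw [pathCount_of_notMem hx, pathCount_of_notMem (mt (hA x).1 hx)]

theorem succ_mul_pathCount_add_single (hA : ∀ x, x + Pi.single j 1 ∈ A ↔ x ∈ A)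
    (x : Fin k → ℕ) :
    (x j + 1) * pathCount A 0 (x + Pi.single j 1) = (∑ i, x i + 1) * pathCount A 0 x := by
  induction x using WellFoundedLT.induction with
  | _ x ih =>
    by_cases hx : x ∈ A
    swap
    · rw [pathCount_of_notMem hx, pathCount_of_notMem (mt (hA x).1 hx), mul_zero, mul_zero]
    set n := ∑ i, x i
    set D := if 0 < x j then pathCount A 0 (x - Pi.single j 1) else 0
    set S := ∑ i ∈ Finset.univ.erase j,
      if 0 < x i then pathCount A 0 (x - Pi.single i 1) else 0
    -- multiplied by `n` so as to hold also at `x = 0`, where the recursion does not apply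
    have hexpand : n * pathCount A 0 x = n * (D + S) := by
      by_cases hx0 : x = 0
      · simp [n, hx0]
      · rw [pathCount_of_ne_of_mem hx0 hx, ← Finset.add_sum_erase _ _ (Finset.mem_univ j)]
    have hdiag : x j * pathCount A 0 x = n * D := by
      by_cases hj : 0 < x j
      · have h := ih _ (sub_single_lt hj)
        rw [sub_single_add_single hj, sum_sub_single_add_one hj] at h
        simpa [D, hj, Nat.sub_add_cancel hj] using h
      · simp [D, Nat.eq_zero_of_not_pos hj]
    have hoff : (x j + 1) * ∑ i ∈ Finset.univ.erase j,
        (if 0 < x i then pathCount A 0 (x - Pi.single i 1 + Pi.single j 1) else 0) = n * S := by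
      rw [Finset.mul_sum, Finset.mul_sum]
      refine Finset.sum_congr rfl fun i hi => ?_
      split_ifs with hi'
      · have h := ih _ (sub_single_lt hi')
        rwa [sum_sub_single_add_one hi',
          show (x - Pi.single i 1 : Fin k → ℕ) j = x j by simp [Finset.ne_of_mem_erase hi]] at h
      · simp
    rw [pathCount_add_single_of_ne_of_mem (by simp) ((hA x).2 hx), mul_add, hoff]
    linarith

theorem mul_pathCount_zero_eq_sum_mul_pathCount_single (hA : ∀ x, x + Pi.single j 1 ∈ A ↔ x ∈ A)
    (x : Fin k → ℕ) :
    x j * pathCount A 0 x = (∑ i, x i) * pathCount A (Pi.single j 1) x := by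
  by_cases hj : 0 < x j
  · obtain ⟨v, rfl⟩ : ∃ v : Fin k → ℕ, v + Pi.single j 1 = x := ⟨_, sub_single_add_single hj⟩
    have h := pathCount_add_single_add_single (a := 0) hA (x := v)
    rw [zero_add] at h
    simpa [h, Finset.sum_add_distrib] using succ_mul_pathCount_add_single hA v
  · rw [Nat.eq_zero_of_not_pos hj, zero_mul,
      pathCount_eq_zero_of_not_le fun h => hj (Nat.lt_of_succ_le (by simpa using h j)), mul_zero]

theorem pathCount_insert_sub_single {y : Fin k → ℕ} {i : Fin k} (hi : 0 < y i) :
    pathCount (insert y A) a (y - Pi.single i 1) = pathCount A a (y - Pi.single i 1) := by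
  refine pathCount_congr fun z hz => ?_
  have hzy : z ≠ y := by
    rintro rfl
    exact (hz i).not_gt (by simpa using hi)
  simp [hzy]

end PathCount

theorem exitCount_eq_pathCount_sub_single {k : ℕ} {R : Set (Fin k → ℕ)} {a y : Fin k → ℕ}
    {i : Fin k} (hya : y ≠ a) (hi : 0 < y i)
    (hexit : ∀ l ≠ i, 0 < y l → y - Pi.single l 1 ∉ R) :
    exitCount R a y = pathCount R a (y - Pi.single i 1) := by
  rw [exitCount, pathCount_of_ne_of_mem hya (Set.mem_insert _ _),
    Finset.sum_eq_single i _ (by simp), if_pos hi, pathCount_insert_sub_single hi]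
  intro l _ hl
  split_ifs with hl'
  · rw [pathCount_insert_sub_single hl', pathCount_of_notMem (hexit l hl hl')]
  · rfl

/-- For `b > 0` and a boundary point `y ∈ ℕ⁴` with
`y₁ - y₃ = b` and `n = y₁ + y₂ + y₃ + y₄`, with `k(y)` the number of paths from
the origin staying in `R = {x : x₁ - x₃ < b}` except at `y`, and `k₂*(y)` the
number of such paths from `e₂`, one has
`(n-1)·k₂*(y) = y₂·k(y)`, i.e. `k₂*(y)/k(y) = y₂/(n-1)`. -/
theorem estimator_count_identity_e2 (b : ℤ) (hb : 0 < b) (y : Fin 4 → ℕ)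
    (hy : (y 0 : ℤ) - (y 2 : ℤ) = b) (n : ℕ) (hn : n = y 0 + y 1 + y 2 + y 3) :
    ((n : ℤ) - 1) *
        (exitCount {x : Fin 4 → ℕ | (x 0 : ℤ) - (x 2 : ℤ) < b}
          (Pi.single 1 1) y : ℤ)
      = (y 1 : ℤ) *
        (exitCount {x : Fin 4 → ℕ | (x 0 : ℤ) - (x 2 : ℤ) < b} 0 y : ℤ) := by
  set R : Set (Fin 4 → ℕ) := {x | (x 0 : ℤ) - (x 2 : ℤ) < b}
  have hy0 : 0 < y 0 := by omega
  have hR : ∀ x, x + Pi.single 1 1 ∈ R ↔ x ∈ R := by simp [R]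
  have hexit : ∀ l ≠ 0, 0 < y l → y - Pi.single l 1 ∉ R := by
    intro l hl hyl
    simp only [R, Set.mem_ofPred_eq, not_lt, Pi.sub_apply, Pi.single_apply, hl.symm, if_false]
    split_ifs <;> omega
  have hne : ∀ a : Fin 4 → ℕ, a 0 = 0 → y ≠ a := fun a ha h => by simp [h, ha] at hy0
  have hsum : ∑ i, (y - Pi.single 0 1 : Fin 4 → ℕ) i = n - 1 := by
    have := sum_sub_single_add_one hy0
    rw [Fin.sum_univ_four (f := y)] at this
    omega
  have key := mul_pathCount_zero_eq_sum_mul_pathCount_single hR (y - Pi.single 0 1)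
  rw [hsum, show (y - Pi.single 0 1 : Fin 4 → ℕ) 1 = y 1 by simp] at key
  rw [exitCount_eq_pathCount_sub_single (hne _ rfl) hy0 hexit,
    exitCount_eq_pathCount_sub_single (hne _ rfl) hy0 hexit, ← Nat.cast_pred (by omega)]
  exact_mod_cast key.symm
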